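/- Let R be a ring (not necessarily commutative) and let a, b ∈ R commute: a·b = b·a. Fix a nonnegative integer k and define q_l ∈ R recursively by q_0 = 1, q_1 = a, and q_l = a·q_{l-1} − (l−1)(k−l+1)·b²·q_{l-2} for l ≥ 2, where integer coefficients act via the canonical ℤ-module structure of R. Then q_k = ∏_{j=0}^{k−1} (a + (k−1−2j)·b), the product being taken in the order j = 0, 1, …, k−1 (the factors pairwise commute), and the empty product (for k = 0) is 1. -/

import Mathlib

/-- The Masaki recursion sequence with parameter `k : ℤ`. -/
def masakiQ {S : Type*} [Ring S] (a b : S) (k : ℤ) : ℕ → S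
  | 0 => 1
  | 1 => a
  | (l + 2) => a * masakiQ a b k (l + 1)
      - (((l : ℤ) + 1) * (k - (l : ℤ) - 1)) • (b ^ 2 * masakiQ a b k l)

lemma masakiQ_eq {S : Type*} [Ring S] (a b : S) (c : ℤ) (n : ℕ) :
    masakiQ a b c (n + 2) = a * masakiQ a b c (n + 1)
      - (((n : ℤ) + 1) * (c - (n : ℤ) - 1)) • (b ^ 2 * masakiQ a b c n) := by
  rw [masakiQ]

lemma masakiQ_shift {S : Type*} [CommRing S] (a b : S) (k : ℤ) :
    ∀ l : ℕ, masakiQ a b k (l + 2)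
      = masakiQ a b (k - 2) (l + 2)
        - (((l : ℤ) + 2) * ((l : ℤ) + 1)) • (b ^ 2 * masakiQ a b (k - 2) l)
  | 0 => by
      simp only [masakiQ, zsmul_eq_mul]; push_cast; ring
  | 1 => by
      simp only [masakiQ, zsmul_eq_mul]; push_cast; ring
  | (l + 2) => by
      have ih1 := masakiQ_shift a b k (l + 1)
      have ih0 := masakiQ_shift a b k l
      have e4 := masakiQ_eq a b k (l + 2)
      have e4' := masakiQ_eq a b (k - 2) (l + 2)
      have e3' := masakiQ_eq a b (k - 2) (l + 1)
      have e2' := masakiQ_eq a b (k - 2) l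
      simp only [show l + 2 + 2 = l + 4 from rfl, show l + 2 + 1 = l + 3 from rfl,
        show l + 1 + 2 = l + 3 from rfl, show l + 1 + 1 = l + 2 from rfl]
        at ih1 ih0 e4 e4' e3' e2' ⊢
      simp only [zsmul_eq_mul] at ih1 ih0 e4 e4' e3' e2' ⊢
      push_cast at ih1 ih0 e4 e4' e3' e2' ⊢
      linear_combination e4 - e4' + a * ih1
        - ((l : S) + 3) * ((k : S) - (l : S) - 3) * b ^ 2 * ih0
        + ((l : S) + 3) * ((l : S) + 2) * b ^ 2 * e2'
  termination_by l => l

lemma masakiQ_succ_self {S : Type*} [Ring S] (a b : S) (k : ℕ) :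
    masakiQ a b (k : ℤ) (k + 1) = a * masakiQ a b (k : ℤ) k := by
  cases k with
  | zero => simp [masakiQ]
  | succ m =>
      have h := masakiQ_eq a b ((m + 1 : ℕ) : ℤ) m
      have hc : ((m : ℤ) + 1) * (((m + 1 : ℕ) : ℤ) - (m : ℤ) - 1) = 0 := by push_cast; ring
      rw [hc, zero_zsmul, sub_zero] at h
      exact h

lemma masakiQ_prod {S : Type*} [CommRing S] (a b : S) :
    ∀ k : ℕ, masakiQ a b (k : ℤ) k
      = ((List.range k).map (fun j : ℕ => a + ((k : ℤ) - 1 - 2 * (j : ℤ)) • b)).prod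
  | 0 => by simp [masakiQ]
  | 1 => by
      norm_num [masakiQ, show List.range 1 = [0] from rfl]
  | (k + 2) => by
      have ih := masakiQ_prod a b k
      have hshift := masakiQ_shift a b ((k : ℤ) + 2) k
      rw [show (k : ℤ) + 2 - 2 = (k : ℤ) from by ring] at hshift
      have e2 := masakiQ_eq a b (k : ℤ) k
      have hsucc := masakiQ_succ_self a b k
      have hcast : ((k + 2 : ℕ) : ℤ) = (k : ℤ) + 2 := by push_cast; ring
      rw [hcast, hshift, e2, hsucc]
      -- now the right-hand side
      have hr : List.range (k + 2) = 0 :: (List.range (k + 1)).map Nat.succ :=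
        List.range_succ_eq_map
      rw [hr, List.map_cons, List.map_map, List.prod_cons, List.range_succ,
        List.map_append, List.prod_append]
      have hmid : (List.range k).map
            ((fun j : ℕ => a + ((k : ℤ) + 2 - 1 - 2 * (j : ℤ)) • b) ∘ Nat.succ)
          = (List.range k).map (fun j : ℕ => a + ((k : ℤ) - 1 - 2 * (j : ℤ)) • b) := by
        apply List.map_congr_left
        intro j _
        simp only [Function.comp]
        congr 1
        push_cast
        ring_nf
      rw [hmid, ← ih]
      simp only [List.map_cons, List.map_nil, List.prod_cons, List.prod_nil, mul_one,
        Function.comp]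
      simp only [zsmul_eq_mul]
      push_cast
      ring

/-- Masaki's lemma in a (possibly noncommutative) ring: if `a` and `b` commute,
`q 0 = 1`, `q 1 = a` and `q l = a * q (l-1) - (l-1)(k-l+1) • (b^2 * q (l-2))` for `l ≥ 2`,
then `q k` is the ordered product `∏_{j=0}^{k-1} (a + (k-1-2j) • b)`. -/
theorem masaki_lemma_ring {R : Type*} [Ring R] (a b : R) (hab : a * b = b * a)
    (k : ℕ) (q : ℕ → R)
    (h0 : q 0 = 1) (h1 : q 1 = a)
    (hrec : ∀ l, 2 ≤ l →
      q l = a * q (l - 1)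
        - (((l : ℤ) - 1) * ((k : ℤ) - (l : ℤ) + 1)) • (b ^ 2 * q (l - 2))) :
    q k = ((List.range k).map (fun j => a + ((k : ℤ) - 1 - 2 * (j : ℤ)) • b)).prod := by
  set T : Subring R := Subring.closure {a, b} with hT
  letI : CommRing T := Subring.closureCommRingOfComm (by
    rintro x (rfl | rfl) y (rfl | rfl) <;> simp [hab])
  have ha : a ∈ T := Subring.subset_closure (by simp)
  have hb : b ∈ T := Subring.subset_closure (by simp)
  set a' : T := ⟨a, ha⟩ with ha'
  set b' : T := ⟨b, hb⟩ with hb'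
  have ca : ((a' : T) : R) = a := rfl
  have cb : ((b' : T) : R) = b := rfl
  have cmul : ∀ x y : T, ((x * y : T) : R) = (x : R) * (y : R) := fun _ _ => rfl
  have cadd : ∀ x y : T, ((x + y : T) : R) = (x : R) + (y : R) := fun _ _ => rfl
  have csub : ∀ x y : T, ((x - y : T) : R) = (x : R) - (y : R) := fun _ _ => rfl
  have cone : ((1 : T) : R) = 1 := rfl
  have cint : ∀ c : ℤ, (((c : T) : T) : R) = (c : R) := fun _ => rfl
  have cpow2 : ∀ x : T, ((x ^ 2 : T) : R) = (x : R) ^ 2 := fun _ => rfl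
  have key : ∀ l : ℕ, q l = ((masakiQ a' b' (k : ℤ) l : T) : R) := by
    intro l
    induction l using Nat.strong_induction_on with
    | _ l ih =>
      match l with
      | 0 => rw [h0, show masakiQ a' b' (k : ℤ) 0 = 1 from by simp [masakiQ]]; exact cone.symm
      | 1 => rw [h1, show masakiQ a' b' (k : ℤ) 1 = a' from by simp [masakiQ]]
      | (m + 2) =>
        have h := hrec (m + 2) (by omega)
        rw [show m + 2 - 1 = m + 1 from rfl, show m + 2 - 2 = m from rfl,
          ih (m + 1) (by omega), ih m (by omega)] at h
        have hc : (((m + 2 : ℕ) : ℤ) - 1) * ((k : ℤ) - ((m + 2 : ℕ) : ℤ) + 1)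
            = ((m : ℤ) + 1) * ((k : ℤ) - (m : ℤ) - 1) := by push_cast; ring
        rw [hc] at h
        have goalT : ((masakiQ a' b' (k : ℤ) (m + 2) : T) : R)
            = a * ((masakiQ a' b' (k : ℤ) (m + 1) : T) : R)
              - (((m : ℤ) + 1) * ((k : ℤ) - (m : ℤ) - 1)) •
                  (b ^ 2 * ((masakiQ a' b' (k : ℤ) m : T) : R)) := by
          rw [masakiQ_eq]
          simp only [zsmul_eq_mul, csub, cmul, cint, cpow2, ca, cb]
        rw [h]
        exact goalT.symm
  rw [key k]
  have hsame : ((List.range k).map (fun j => a + ((k : ℤ) - 1 - 2 * (j : ℤ)) • b)).prod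
      = ((List.range k).map (fun j : ℕ => a + ((k : ℤ) - 1 - 2 * (j : ℤ)) • b)).prod := by
    congr 1
    rw [show (Bind.bind (List.range k) (fun a => Pure.pure ((a : ℤ))))
        = List.map (Nat.cast : ℕ → ℤ) (List.range k) from List.map_eq_flatMap.symm,
      List.map_map]
    exact List.map_congr_left fun j _ => rfl
  rw [hsame]
  have clist : ∀ L : List T, ((L.prod : T) : R) = (L.map (fun x : T => (x : R))).prod := by
    intro L
    induction L with
    | nil => exact cone
    | cons x xs ihx => rw [List.prod_cons, List.map_cons, List.prod_cons, cmul, ihx]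
  rw [masakiQ_prod, clist, List.map_map]
  congr 1
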